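/- Suppose S has β-rectangular Apéry set, i.e., Ap(S) = B where B = {Σ_{i=2}^ν λ_i g_i : 0 ≤ λ_i ≤ β_i}. Then every representation ω = Σ_{i=2}^ν λ_i g_i of an element ω ∈ Ap(S) with λ_i ≤ β_i for all i is a maximal representation (Σ λ_i = ord(ω)). -/

import Mathlib

open Finset

/-- `S` is a numerical semigroup: a submonoid of `(ℕ, +)` with finite complement. -/
def IsNumSgp (S : Set ℕ) : Prop :=
  0 ∈ S ∧ (∀ a ∈ S, ∀ b ∈ S, a + b ∈ S) ∧ (Sᶜ : Set ℕ).Finite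

/-- `s` belongs to the Apéry set of `S` with respect to `m`:
`s ∈ S` and `s - m ∉ S` (i.e. no `u ∈ S` with `u + m = s`). -/
def InApery (S : Set ℕ) (m s : ℕ) : Prop :=
  s ∈ S ∧ ∀ u ∈ S, u + m ≠ s

def AperySet (S : Set ℕ) (m : ℕ) : Set ℕ := {s | InApery S m s}

/-- `ordS S s` is the largest `h` such that `s` is a sum of `h` nonzero elements of `S`. -/
noncomputable def ordS (S : Set ℕ) (s : ℕ) : ℕ :=
  sSup {h : ℕ | ∃ f : Fin h → ℕ, (∀ j, f j ∈ S ∧ f j ≠ 0) ∧ ∑ j, f j = s}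

/-- `g` generates `S`. -/
def Generates (S : Set ℕ) {ν : ℕ} (g : Fin ν → ℕ) : Prop :=
  ∀ s, s ∈ S ↔ ∃ lam : Fin ν → ℕ, ∑ i, lam i * g i = s

/-- `g` is a minimal generating system of `S`: it generates `S`
and no `g i` is generated by the remaining generators. -/
def MinimalGen (S : Set ℕ) {ν : ℕ} (g : Fin ν → ℕ) : Prop :=
  Generates S g ∧ ∀ i, ¬ ∃ lam : Fin ν → ℕ, lam i = 0 ∧ ∑ j, lam j * g j = g i

/-- `lam` is a maximal representation of `s`: the coefficient sum equals `ordS S s`. -/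
def IsMaxRep (S : Set ℕ) {ν : ℕ} (g : Fin ν → ℕ) (lam : Fin ν → ℕ) (s : ℕ) : Prop :=
  ∑ i, lam i * g i = s ∧ ∑ i, lam i = ordS S s

/-- `s` has a unique maximal representation. -/
def UniqueMaxRep (S : Set ℕ) {ν : ℕ} (g : Fin ν → ℕ) (s : ℕ) : Prop :=
  ∃! lam : Fin ν → ℕ, IsMaxRep S g lam s

/-- `β_i = max {h | h g_i ∈ Ap(S) and ord(h g_i) = h}`. -/
noncomputable def betaN (S : Set ℕ) (m : ℕ) {ν : ℕ} (g : Fin ν → ℕ) (i : Fin ν) : ℕ :=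
  sSup {h : ℕ | InApery S m (h * g i) ∧ ordS S (h * g i) = h}

/-- `γ_i = max {h | h g_i ∈ Ap(S), ord(h g_i) = h and h g_i has a unique
maximal representation}`. -/
noncomputable def gammaN (S : Set ℕ) (m : ℕ) {ν : ℕ} (g : Fin ν → ℕ) (i : Fin ν) : ℕ :=
  sSup {h : ℕ | InApery S m (h * g i) ∧ ordS S (h * g i) = h ∧ UniqueMaxRep S g (h * g i)}

/-- `B = {Σ_{i≥2} λ_i g_i : 0 ≤ λ_i ≤ β_i}`. -/
def Bset (S : Set ℕ) (m : ℕ) {ν : ℕ} [NeZero ν] (g : Fin ν → ℕ) : Set ℕ :=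
  {s | ∃ lam : Fin ν → ℕ, lam 0 = 0 ∧ (∀ i, lam i ≤ betaN S m g i) ∧ ∑ i, lam i * g i = s}

/-- `Γ = {Σ_{i≥2} λ_i g_i : 0 ≤ λ_i ≤ γ_i}`. -/
def GammaSet (S : Set ℕ) (m : ℕ) {ν : ℕ} [NeZero ν] (g : Fin ν → ℕ) : Set ℕ :=
  {s | ∃ lam : Fin ν → ℕ, lam 0 = 0 ∧ (∀ i, lam i ≤ gammaN S m g i) ∧ ∑ i, lam i * g i = s}

/-- `s ⪯_M t`. -/
def predM (S : Set ℕ) (s t : ℕ) : Prop :=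
  ∃ u ∈ S, s + u = t ∧ ordS S s + ordS S u = ordS S t

/-! Let `δ = β - λ`. The corner `Σ β_i g_i` lies in `B = Ap(S)`. Since `ord` is superadditive,
`ord ω + Σ δ_i ≤ ord (Σ β_i g_i)`; since every coordinate of a maximal representation of an
Apéry element is bounded by the corresponding `β_i`, `ord (Σ β_i g_i) ≤ Σ β_i = Σ λ_i + Σ δ_i`.
Hence `ord ω ≤ Σ λ_i`, and the reverse inequality holds for every representation. -/

variable {S : Set ℕ} {ν : ℕ} {g : Fin ν → ℕ}

theorem sum_add_apply_mul (lam mu : Fin ν → ℕ) :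
    ∑ i, (lam + mu) i * g i = ∑ i, lam i * g i + ∑ i, mu i * g i := by
  simp only [Pi.add_apply, add_mul, sum_add_distrib]

theorem bddAbove_ordS_set (S : Set ℕ) (s : ℕ) :
    BddAbove {h : ℕ | ∃ f : Fin h → ℕ, (∀ j, f j ∈ S ∧ f j ≠ 0) ∧ ∑ j, f j = s} := by
  refine ⟨s, fun h hh => ?_⟩
  obtain ⟨f, hf, rfl⟩ := hh
  calc h = ∑ _j : Fin h, 1 := by simp
    _ ≤ ∑ j, f j := sum_le_sum fun j _ => Nat.one_le_iff_ne_zero.2 (hf j).2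

theorem le_ordS {s h : ℕ} (f : Fin h → ℕ) (hf : ∀ j, f j ∈ S ∧ f j ≠ 0) (hsum : ∑ j, f j = s) :
    h ≤ ordS S s :=
  le_csSup (bddAbove_ordS_set S s) ⟨f, hf, hsum⟩

theorem exists_summands_ordS {s h : ℕ} (f : Fin h → ℕ) (hf : ∀ j, f j ∈ S ∧ f j ≠ 0)
    (hsum : ∑ j, f j = s) :
    ∃ f : Fin (ordS S s) → ℕ, (∀ j, f j ∈ S ∧ f j ≠ 0) ∧ ∑ j, f j = s :=
  Nat.sSup_mem (s := {h : ℕ | ∃ f : Fin h → ℕ, (∀ j, f j ∈ S ∧ f j ≠ 0) ∧ ∑ j, f j = s})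
    ⟨h, f, hf, hsum⟩ (bddAbove_ordS_set S s)

namespace Generates

theorem sum_mem (hgen : Generates S g) (lam : Fin ν → ℕ) : ∑ i, lam i * g i ∈ S :=
  (hgen _).2 ⟨lam, rfl⟩

theorem zero_mem (hgen : Generates S g) : 0 ∈ S := by
  simpa using hgen.sum_mem 0

theorem add_mem (hgen : Generates S g) {a b : ℕ} (ha : a ∈ S) (hb : b ∈ S) : a + b ∈ S := by
  obtain ⟨lam, rfl⟩ := (hgen a).1 ha
  obtain ⟨mu, rfl⟩ := (hgen b).1 hb
  simpa only [sum_add_apply_mul] using hgen.sum_mem (lam + mu)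

theorem mul_mem (hgen : Generates S g) (n : ℕ) {x : ℕ} (hx : x ∈ S) : n * x ∈ S := by
  induction n with
  | zero => simpa using hgen.zero_mem
  | succ n ih => simpa [add_mul] using hgen.add_mem ih hx

theorem mem (hgen : Generates S g) (i : Fin ν) : g i ∈ S := by
  classical
  simpa [Pi.single_apply, ite_mul] using hgen.sum_mem (Pi.single i 1)

end Generates

theorem InApery.of_add (hgen : Generates S g) {m a b : ℕ} (h : InApery S m (a + b))
    (ha : a ∈ S) (hb : b ∈ S) : InApery S m a :=
  ⟨ha, fun u hu hum => h.2 (u + b) (hgen.add_mem hu hb) (by omega)⟩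

theorem exists_summands_of_repr (hg : ∀ i, g i ≠ 0) (hgS : ∀ i, g i ∈ S) (lam : Fin ν → ℕ) :
    ∃ f : Fin (∑ i, lam i) → ℕ, (∀ j, f j ∈ S ∧ f j ≠ 0) ∧ ∑ j, f j = ∑ i, lam i * g i := by
  refine ⟨fun k => g (finSigmaFinEquiv.symm k).1, fun k => ⟨hgS _, hg _⟩, ?_⟩
  rw [Equiv.sum_comp finSigmaFinEquiv.symm (fun p => g p.1), Fintype.sum_sigma]
  simp

theorem sum_le_ordS (hgen : Generates S g) (hg : ∀ i, g i ≠ 0) (lam : Fin ν → ℕ) :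
    ∑ i, lam i ≤ ordS S (∑ i, lam i * g i) :=
  let ⟨f, hf, hsum⟩ := exists_summands_of_repr hg hgen.mem lam
  le_ordS f hf hsum

theorem exists_isMaxRep (hgen : Generates S g) (hg : ∀ i, g i ≠ 0) {s : ℕ} (hs : s ∈ S) :
    ∃ mu : Fin ν → ℕ, IsMaxRep S g mu s := by
  obtain ⟨lam, hlam⟩ := (hgen s).1 hs
  obtain ⟨f₀, hf₀, hsum₀⟩ := exists_summands_of_repr hg hgen.mem lam
  obtain ⟨f, hf, hsum⟩ := exists_summands_ordS f₀ hf₀ (hsum₀.trans hlam)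
  choose c hc using fun j => (hgen (f j)).1 (hf j).1
  set mu : Fin ν → ℕ := fun i => ∑ j, c j i
  have hrep : ∑ i, mu i * g i = s := by
    simp_rw [mu, sum_mul]
    rw [sum_comm]
    exact (sum_congr rfl fun j _ => hc j).trans hsum
  refine ⟨mu, hrep, le_antisymm (hrep ▸ sum_le_ordS hgen hg mu) ?_⟩
  -- each summand `f j ≠ 0` contributes at least one generator
  have hc_pos : ∀ j, 1 ≤ ∑ i, c j i := by
    intro j
    by_contra! h0
    simp only [Nat.lt_one_iff, sum_eq_zero_iff, mem_univ, true_implies] at h0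
    exact (hf j).2 (by simp [← hc j, h0])
  calc ordS S s = ∑ _j : Fin (ordS S s), 1 := by simp
    _ ≤ ∑ j, ∑ i, c j i := sum_le_sum fun j _ => hc_pos j
    _ = ∑ i, mu i := sum_comm

theorem ordS_add_sum_le (hgen : Generates S g) (hg : ∀ i, g i ≠ 0) (lam δ : Fin ν → ℕ) :
    ordS S (∑ i, lam i * g i) + ∑ i, δ i ≤ ordS S (∑ i, (lam + δ) i * g i) := by
  obtain ⟨mu, hmu, hmu_ord⟩ := exists_isMaxRep hgen hg (hgen.sum_mem lam)
  have hrep : ∑ i, (mu + δ) i * g i = ∑ i, (lam + δ) i * g i := by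
    rw [sum_add_apply_mul, sum_add_apply_mul, hmu]
  calc ordS S (∑ i, lam i * g i) + ∑ i, δ i = ∑ i, (mu + δ) i := by
        rw [← hmu_ord, ← sum_add_distrib]; rfl
    _ ≤ ordS S (∑ i, (mu + δ) i * g i) := sum_le_ordS hgen hg _
    _ = _ := by rw [hrep]

theorem lt_of_mul_inApery (hgen : Generates S g) {m x h : ℕ} (hm : m ∈ S) (hx : 0 < x)
    (hxS : x ∈ S) (hap : InApery S m (h * x)) : h < m := by
  by_contra! hmh
  obtain ⟨k, rfl⟩ := Nat.exists_eq_add_of_le hmh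
  obtain ⟨l, rfl⟩ := Nat.exists_eq_add_of_le' (Nat.one_le_iff_ne_zero.2 hx.ne')
  -- `(m + k)(l + 1) = (k (l + 1) + l m) + m`
  refine hap.2 (k * (l + 1) + l * m) (hgen.add_mem (hgen.mul_mem k hxS) (hgen.mul_mem l hm)) ?_
  ring

theorem le_betaN_of_inApery (hgen : Generates S g) {m h : ℕ} {i : Fin ν} (hm : m ∈ S)
    (hgi : 0 < g i) (hap : InApery S m (h * g i)) (hord : ordS S (h * g i) = h) :
    h ≤ betaN S m g i :=
  le_csSup ⟨m, fun _ hk => (lt_of_mul_inApery hgen hm hgi (hgen.mem i) hk.1).le⟩ ⟨hap, hord⟩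

theorem betaN_zero [NeZero ν] (hgen : Generates S g) : betaN S (g 0) g 0 = 0 := by
  refine Nat.le_zero.1 (csSup_le' fun h ⟨hap, _⟩ => ?_)
  obtain _ | k := h
  · rfl
  · exact absurd (by ring) (hap.2 (k * g 0) (hgen.mul_mem k (hgen.mem 0)))

theorem IsMaxRep.le_betaN (hgen : Generates S g) (hg : ∀ i, 0 < g i) {m w : ℕ} (hm : m ∈ S)
    (hw : InApery S m w) {mu : Fin ν → ℕ} (hmu : IsMaxRep S g mu w) (i : Fin ν) :
    mu i ≤ betaN S m g i := by
  classical
  have hg' : ∀ i, g i ≠ 0 := fun i => (hg i).ne'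
  set rest : Fin ν → ℕ := Function.update mu i 0
  have hsplit : Pi.single i (mu i) + rest = mu := by
    ext j
    rcases eq_or_ne j i with rfl | hj <;> simp [rest, *]
  have hsingle : ∑ j, (Pi.single i (mu i) : Fin ν → ℕ) j * g j = mu i * g i := by
    simp [Pi.single_apply, ite_mul]
  have hsum : mu i + ∑ j, rest j = ∑ j, mu j := by
    conv_rhs => rw [← hsplit]
    simp [sum_add_distrib]
  -- maximality of `mu` leaves no room for `ord (mu i * g i)` to exceed `mu i`
  have hupper := ordS_add_sum_le hgen hg' (Pi.single i (mu i)) rest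
  rw [hsplit, hmu.1, ← hmu.2, hsingle] at hupper
  have hlower : mu i ≤ ordS S (mu i * g i) := by
    simpa [hsingle] using sum_le_ordS hgen hg' (Pi.single i (mu i))
  have hap : InApery S m (mu i * g i) := by
    have hdecomp : mu i * g i + ∑ j, rest j * g j = w := by
      rw [← hmu.1, ← hsingle, ← sum_add_apply_mul, hsplit]
    exact (hdecomp ▸ hw).of_add hgen (hgen.mul_mem _ (hgen.mem i)) (hgen.sum_mem rest)
  exact le_betaN_of_inApery hgen hm (hg i) hap (by omega)

theorem ordS_le_sum_betaN (hgen : Generates S g) (hg : ∀ i, 0 < g i) {m w : ℕ} (hm : m ∈ S)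
    (hw : InApery S m w) : ordS S w ≤ ∑ i, betaN S m g i := by
  obtain ⟨mu, hmu⟩ := exists_isMaxRep hgen (fun i => (hg i).ne') hw.1
  exact hmu.2 ▸ sum_le_sum fun i _ => hmu.le_betaN hgen hg hm hw i

theorem betaRect_rep_is_maximal_general (S : Set ℕ) {ν : ℕ} [NeZero ν] (g : Fin ν → ℕ)
    (hgen : MinimalGen S g) (hmono : StrictMono g)
    (hmpos : 0 < g 0)
    (hrect : AperySet S (g 0) = Bset S (g 0) g)
    (ω : ℕ) (lam : Fin ν → ℕ)
    (hle : ∀ i, lam i ≤ betaN S (g 0) g i) (hrep : ∑ i, lam i * g i = ω) :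
    ∑ i, lam i = ordS S ω := by
  obtain ⟨hgen, -⟩ := hgen
  have hg : ∀ i, 0 < g i := fun i => hmpos.trans_le (hmono.monotone (Fin.zero_le i))
  have hg0 : ∀ i, g i ≠ 0 := fun i => (hg i).ne'
  set β := betaN S (g 0) g
  have hcorner : InApery S (g 0) (∑ i, β i * g i) := by
    change _ ∈ AperySet S (g 0)
    exact hrect ▸ ⟨β, betaN_zero hgen, fun _ => le_rfl, rfl⟩
  have hβ : lam + (β - lam) = β := funext fun i => add_tsub_cancel_of_le (hle i)
  have hω_ord : ordS S ω + ∑ i, (β - lam) i ≤ ordS S (∑ i, β i * g i) := by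
    simpa only [hβ, hrep] using ordS_add_sum_le hgen hg0 lam (β - lam)
  have hcorner_ord : ordS S (∑ i, β i * g i) ≤ ∑ i, β i :=
    ordS_le_sum_betaN hgen hg (hgen.mem 0) hcorner
  have hβ_sum : ∑ i, β i = ∑ i, lam i + ∑ i, (β - lam) i := by
    rw [← sum_add_distrib]
    exact congrArg (∑ i, · i) hβ.symm
  have hlam_ord : ∑ i, lam i ≤ ordS S ω := hrep ▸ sum_le_ordS hgen hg0 lam
  omega

theorem betaRect_rep_is_maximal (S : Set ℕ) {ν : ℕ} [NeZero ν] (g : Fin ν → ℕ) (hν : 2 ≤ ν)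
    (hS : IsNumSgp S) (hgen : MinimalGen S g) (hmono : StrictMono g)
    (hmpos : 0 < g 0) (hmul : ∀ s ∈ S, s ≠ 0 → g 0 ≤ s)
    (hrect : AperySet S (g 0) = Bset S (g 0) g)
    (ω : ℕ) (hω : InApery S (g 0) ω) (lam : Fin ν → ℕ) (hlam0 : lam 0 = 0)
    (hle : ∀ i, lam i ≤ betaN S (g 0) g i) (hrep : ∑ i, lam i * g i = ω) :
    ∑ i, lam i = ordS S ω :=
  betaRect_rep_is_maximal_general S g hgen hmono hmpos hrect ω lam hle hrep
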